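/- arXiv:2108.12864 — 3 statements merged into one kernel-verified Lean document; each statement's English description precedes it below -/
import Mathlib

section
/- For any finite graph G on n vertices with average degree d, the number of walks of length k in G (with starting vertex specified, so a walk and its reversal count separately unless equal) is at least n·d^k. -/
open Finset
set_option linter.unusedSectionVars false
set_option maxHeartbeats 1000000
namespace WalkLB
open SimpleGraph
variable {V : Type*} [Fintype V] [DecidableEq V] (G : SimpleGraph V) [DecidableRel G.Adj]

noncomputable def wwt {u t : V} (p : G.Walk u t) : ℝ :=
  (p.support.dropLast.map fun x => ((G.degree x : ℝ))⁻¹).prod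
noncomputable def gsum (φ : V → ℝ) {u t : V} (p : G.Walk u t) : ℝ :=
  (p.support.tail.map φ).sum
@[simp] lemma wwt_nil {u : V} : wwt G (Walk.nil : G.Walk u u) = 1 := by simp [wwt]
@[simp] lemma gsum_nil (φ : V → ℝ) {u : V} : gsum G φ (Walk.nil : G.Walk u u) = 0 := by simp [gsum]
lemma wwt_cons {u v t : V} (h : G.Adj u v) (p : G.Walk v t) :
    wwt G (Walk.cons h p) = ((G.degree u : ℝ))⁻¹ * wwt G p := by
  rw [wwt, wwt, Walk.support_cons]; rw [p.support_eq_cons]; simp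
  cases p <;> simp
lemma gsum_cons (φ : V → ℝ) {u v t : V} (h : G.Adj u v) (p : G.Walk v t) :
    gsum G φ (Walk.cons h p) = φ v + gsum G φ p := by
  rw [gsum, gsum, Walk.support_cons, List.tail_cons]
  conv_lhs => rw [p.support_eq_cons]
  simp
  cases p <;> simp
lemma wwt_nonneg {u t : V} (p : G.Walk u t) : 0 ≤ wwt G p := by
  induction p with
  | nil => simp
  | cons h q ih => rw [wwt_cons]; positivity

lemma sum_fwl_succ {u t : V} (n : ℕ) (F : G.Walk u t → ℝ) :
    ∑ p ∈ G.finsetWalkLength (n + 1) u t, F p =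
      ∑ w : G.neighborSet u, ∑ q ∈ G.finsetWalkLength n w t, F (Walk.cons w.2 q) := by
  have hdef : G.finsetWalkLength (n + 1) u t =
      Finset.univ.biUnion fun (w : G.neighborSet u) =>
        (G.finsetWalkLength n w t).map ⟨fun p => Walk.cons w.property p, fun _ _ h => eq_of_heq (Walk.cons.inj h).2⟩ := rfl
  rw [hdef, Finset.sum_biUnion]
  · exact Finset.sum_congr rfl fun w _ => Finset.sum_map _ _ _
  · intro a _ b _ hab
    refine Finset.disjoint_left.mpr ?_
    rintro p hp hp'
    simp only [Finset.mem_map, Function.Embedding.coeFn_mk] at hp hp'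
    obtain ⟨q, _, rfl⟩ := hp
    obtain ⟨q', _, h⟩ := hp'
    have : (b : V) = a := by
      have := congrArg (fun (w : G.Walk u t) => w.getVert 1) h
      change (Walk.cons ((G.mem_neighborSet u b).mp b.2) q').getVert 1 =
        (Walk.cons ((G.mem_neighborSet u a).mp a.2) q).getVert 1 at this
      simpa using this
    exact hab (Subtype.ext this.symm ▸ rfl)

lemma sum_neighborSet (u : V) (f : V → ℝ) :
    ∑ w : G.neighborSet u, f w = ∑ v ∈ G.neighborFinset u, f v := by
  rw [G.neighborFinset_def]; exact Finset.sum_set_coe _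
lemma fwl_zero_self (u : V) : G.finsetWalkLength 0 u u = {Walk.nil} := by
  simp [finsetWalkLength]
lemma fwl_zero_ne {u t : V} (h : u ≠ t) : G.finsetWalkLength 0 u t = ∅ := by
  simp [finsetWalkLength, h]
lemma sum_fwl_zero {u : V} (F : ∀ t : V, G.Walk u t → ℝ) :
    ∑ t, ∑ p ∈ G.finsetWalkLength 0 u t, F t p = F u Walk.nil := by
  rw [Finset.sum_eq_single u]
  · rw [fwl_zero_self]; simp
  · intro t _ ht; rw [fwl_zero_ne G (Ne.symm ht)]; simp
  · simp

noncomputable def aW (k : ℕ) (u : V) : ℝ :=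
  ∑ t, ∑ p ∈ G.finsetWalkLength k u t, wwt G p
noncomputable def bW (φ : V → ℝ) (k : ℕ) (u : V) : ℝ :=
  ∑ t, ∑ p ∈ G.finsetWalkLength k u t, wwt G p * gsum G φ p
noncomputable def cW (φ : V → ℝ) (k : ℕ) (u : V) : ℝ :=
  ∑ t, ∑ p ∈ G.finsetWalkLength k u t, wwt G p * φ t

@[simp] lemma aW_zero (u : V) : aW G 0 u = 1 := by rw [aW, sum_fwl_zero]; simp
@[simp] lemma bW_zero (φ : V → ℝ) (u : V) : bW G φ 0 u = 0 := by rw [bW, sum_fwl_zero]; simp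
@[simp] lemma cW_zero (φ : V → ℝ) (u : V) : cW G φ 0 u = φ u := by rw [cW, sum_fwl_zero]; simp

lemma aW_succ (k : ℕ) (u : V) :
    aW G (k + 1) u = ((G.degree u : ℝ))⁻¹ * ∑ v ∈ G.neighborFinset u, aW G k v := by
  rw [aW, Finset.mul_sum]
  simp_rw [sum_fwl_succ]
  rw [Finset.sum_comm]
  rw [← sum_neighborSet G u (fun v => ((G.degree u : ℝ))⁻¹ * aW G k v)]
  refine Finset.sum_congr rfl fun w _ => ?_
  rw [aW, Finset.mul_sum]
  refine Finset.sum_congr rfl fun t _ => ?_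
  rw [Finset.mul_sum]
  exact Finset.sum_congr rfl fun q _ => wwt_cons G w.2 q

lemma bW_succ (φ : V → ℝ) (k : ℕ) (u : V) :
    bW G φ (k + 1) u = ((G.degree u : ℝ))⁻¹ *
      ∑ v ∈ G.neighborFinset u, (φ v * aW G k v + bW G φ k v) := by
  rw [bW, Finset.mul_sum]
  simp_rw [sum_fwl_succ]
  rw [Finset.sum_comm]
  rw [← sum_neighborSet G u
    (fun v => ((G.degree u : ℝ))⁻¹ * (φ v * aW G k v + bW G φ k v))]
  refine Finset.sum_congr rfl fun w _ => ?_
  simp_rw [wwt_cons G w.2, gsum_cons G _ w.2]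
  rw [aW, bW, Finset.mul_sum, ← Finset.sum_add_distrib, Finset.mul_sum]
  refine Finset.sum_congr rfl fun t _ => ?_
  rw [Finset.mul_sum, ← Finset.sum_add_distrib, Finset.mul_sum]
  exact Finset.sum_congr rfl fun q _ => by ring

lemma cW_succ (φ : V → ℝ) (k : ℕ) (u : V) :
    cW G φ (k + 1) u = ((G.degree u : ℝ))⁻¹ * ∑ v ∈ G.neighborFinset u, cW G φ k v := by
  rw [cW, Finset.mul_sum]
  simp_rw [sum_fwl_succ]
  rw [Finset.sum_comm]
  rw [← sum_neighborSet G u (fun v => ((G.degree u : ℝ))⁻¹ * cW G φ k v)]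
  refine Finset.sum_congr rfl fun w _ => ?_
  rw [cW, Finset.mul_sum]
  refine Finset.sum_congr rfl fun t _ => ?_
  rw [Finset.mul_sum]
  exact Finset.sum_congr rfl fun q _ => by rw [wwt_cons G w.2 q]; ring


lemma degree_pos_of_adj {u v : V} (h : G.Adj u v) : 0 < G.degree v :=
  G.degree_pos_iff_exists_adj v |>.mpr ⟨u, h.symm⟩

lemma deg_mul_aW (k : ℕ) : ∀ u : V, (G.degree u : ℝ) * aW G k u = G.degree u := by
  induction k with
  | zero => intro u; simp
  | succ k ih =>
    intro u
    by_cases hd : G.degree u = 0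
    · have : G.neighborFinset u = ∅ := Finset.card_eq_zero.mp hd
      rw [aW_succ, this]
      simp [hd]
    · have h1 : ∀ v ∈ G.neighborFinset u, aW G k v = 1 := by
        intro v hv
        have hadj : G.Adj u v := (G.mem_neighborFinset u v).mp hv
        have hdv : (G.degree v : ℝ) ≠ 0 := by
          exact_mod_cast (degree_pos_of_adj G hadj).ne'
        have := ih v
        field_simp at this
        tauto
      rw [aW_succ, Finset.sum_congr rfl h1, Finset.sum_const,
        G.card_neighborFinset_eq_degree, nsmul_eq_mul, mul_one]
      have : (G.degree u : ℝ) ≠ 0 := by exact_mod_cast hd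
      field_simp

lemma sum_nbr_swap (f : V → ℝ) :
    ∑ u, ∑ v ∈ G.neighborFinset u, f v = ∑ v, (G.degree v : ℝ) * f v := by
  have h1 : ∀ u, ∑ v ∈ G.neighborFinset u, f v = ∑ v, if G.Adj u v then f v else 0 := by
    intro u
    rw [← Finset.sum_filter]
    refine Finset.sum_congr ?_ fun _ _ => rfl
    ext v; simp [G.mem_neighborFinset]
  simp_rw [h1]
  rw [Finset.sum_comm]
  refine Finset.sum_congr rfl fun v _ => ?_
  have h2 : ∀ u, (if G.Adj u v then f v else 0) = (if G.Adj v u then f v else 0) := by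
    intro u; simp_rw [G.adj_comm]
  simp_rw [h2]
  rw [← Finset.sum_filter]
  have h3 : univ.filter (G.Adj v) = G.neighborFinset v := by ext x; simp
  rw [h3, Finset.sum_const, G.card_neighborFinset_eq_degree, nsmul_eq_mul]

lemma sum_deg_aW (k : ℕ) :
    ∑ u, (G.degree u : ℝ) * aW G k u = ∑ u, (G.degree u : ℝ) :=
  Finset.sum_congr rfl fun u _ => deg_mul_aW G k u

lemma sum_deg_bW (φ : V → ℝ) (k : ℕ) :
    ∑ u, (G.degree u : ℝ) * bW G φ k u = k * ∑ v, (G.degree v : ℝ) * φ v := by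
  induction k with
  | zero => simp
  | succ k ih =>
    have key : ∀ u, (G.degree u : ℝ) * bW G φ (k+1) u
        = ∑ v ∈ G.neighborFinset u, (φ v * aW G k v + bW G φ k v) := by
      intro u
      by_cases hd : G.degree u = 0
      · have he : G.neighborFinset u = ∅ := Finset.card_eq_zero.mp hd
        rw [bW_succ, he]
        simp [hd]
      · rw [bW_succ, ← mul_assoc]
        have : (G.degree u : ℝ) ≠ 0 := by exact_mod_cast hd
        rw [mul_inv_cancel₀ this, one_mul]
    simp_rw [key]
    rw [sum_nbr_swap]
    have expand : ∀ v, (G.degree v : ℝ) * (φ v * aW G k v + bW G φ k v)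
        = φ v * ((G.degree v : ℝ) * aW G k v) + (G.degree v : ℝ) * bW G φ k v := by
      intro v; ring
    simp_rw [expand, deg_mul_aW]
    rw [Finset.sum_add_distrib, ih]
    push_cast
    ring_nf
    rw [Finset.sum_congr rfl (fun v _ => mul_comm (φ v) ((G.degree v : ℝ)))]
    ring

lemma sum_deg_cW (φ : V → ℝ) (k : ℕ) :
    ∑ u, (G.degree u : ℝ) * cW G φ k u = ∑ v, (G.degree v : ℝ) * φ v := by
  induction k with
  | zero => simp
  | succ k ih =>
    have key : ∀ u, (G.degree u : ℝ) * cW G φ (k+1) u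
        = ∑ v ∈ G.neighborFinset u, cW G φ k v := by
      intro u
      by_cases hd : G.degree u = 0
      · have he : G.neighborFinset u = ∅ := Finset.card_eq_zero.mp hd
        rw [cW_succ, he]
        simp [hd]
      · rw [cW_succ, ← mul_assoc]
        have : (G.degree u : ℝ) ≠ 0 := by exact_mod_cast hd
        rw [mul_inv_cancel₀ this, one_mul]
    simp_rw [key]
    rw [sum_nbr_swap, ih]


noncomputable def phi : V → ℝ := fun x => Real.log (G.degree x)

lemma walk_identity {u t : V} (p : G.Walk u t) : 1 ≤ p.length →
    (G.degree u : ℝ) * (wwt G p * Real.exp (gsum G (phi G) p - phi G t)) = 1 := by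
  induction p with
  | nil => simp
  | @cons u v t h q ih =>
    intro _
    have hdu : (0:ℝ) < G.degree u := by exact_mod_cast degree_pos_of_adj G h.symm
    have hdv : (0:ℝ) < G.degree v := by exact_mod_cast degree_pos_of_adj G h
    rw [wwt_cons, gsum_cons]
    cases q with
    | nil =>
      simp only [wwt_nil, gsum_nil, mul_one, add_zero, phi, sub_self, Real.exp_zero]
      field_simp
    | cons h' q' =>
      have ih' := ih (by simp)
      have he : phi G v + gsum G (phi G) (Walk.cons h' q') - phi G t
          = phi G v + (gsum G (phi G) (Walk.cons h' q') - phi G t) := by ring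
      rw [he, Real.exp_add]
      have hev : Real.exp (phi G v) = (G.degree v : ℝ) := Real.exp_log hdv
      rw [hev]
      have harr : (G.degree u : ℝ) * ((G.degree u : ℝ)⁻¹ * wwt G (Walk.cons h' q') *
          ((G.degree v : ℝ) * Real.exp (gsum G (phi G) (Walk.cons h' q') - phi G t)))
          = ((G.degree u : ℝ) * (G.degree u : ℝ)⁻¹) * ((G.degree v : ℝ) *
            (wwt G (Walk.cons h' q') * Real.exp (gsum G (phi G) (Walk.cons h' q') - phi G t))) := by
        ring
      rw [harr, mul_inv_cancel₀ hdu.ne', one_mul, ih']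

lemma sum_deg_log (hn : 0 < Fintype.card V) (hT : 0 < ∑ v, (G.degree v : ℝ)) :
    (∑ v, (G.degree v : ℝ)) * Real.log ((∑ v, (G.degree v : ℝ)) / (Fintype.card V : ℝ))
      ≤ ∑ v, (G.degree v : ℝ) * phi G v := by
  set T := ∑ v, (G.degree v : ℝ) with hTdef
  set N : ℝ := (Fintype.card V : ℝ) with hNdef
  have hN : (0:ℝ) < N := by rw [hNdef]; exact_mod_cast hn
  have hTN : 0 < T / N := div_pos hT hN
  set s := univ.filter (fun v => G.degree v ≠ 0) with hs
  have h1 : ∑ v ∈ s, (G.degree v : ℝ) * phi G v = ∑ v, (G.degree v : ℝ) * phi G v := by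
    refine Finset.sum_filter_of_ne ?_
    intro v _ hf
    intro hdeg
    exact hf (by rw [hdeg]; simp)
  have h2 : ∑ v ∈ s, (G.degree v : ℝ) = T := by
    refine Finset.sum_filter_of_ne ?_
    intro v _ hf
    intro hdeg
    exact hf (by rw [hdeg]; simp)
  have hcard : (s.card : ℝ) ≤ N := by
    rw [hNdef, ← Finset.card_univ]
    exact_mod_cast Finset.card_filter_le _ _
  have key : ∀ v ∈ s, (G.degree v : ℝ) * Real.log (T / N)
      ≤ (G.degree v : ℝ) * phi G v - (G.degree v : ℝ) + T / N := by
    intro v hv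
    have hd0 : G.degree v ≠ 0 := (Finset.mem_filter.mp hv).2
    have hd : (0:ℝ) < G.degree v := by exact_mod_cast Nat.pos_of_ne_zero hd0
    have hlog := Real.log_le_sub_one_of_pos (div_pos hTN hd)
    rw [Real.log_div hTN.ne' hd.ne'] at hlog
    have hdm : T / N / (G.degree v : ℝ) * (G.degree v : ℝ) = T / N :=
      div_mul_cancel₀ _ hd.ne'
    have hphi : phi G v = Real.log (G.degree v) := rfl
    rw [hphi]
    nlinarith [hlog, hd]
  calc T * Real.log (T / N) = ∑ v ∈ s, (G.degree v : ℝ) * Real.log (T / N) := by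
        rw [← Finset.sum_mul, h2]
    _ ≤ ∑ v ∈ s, ((G.degree v : ℝ) * phi G v - (G.degree v : ℝ) + T / N) :=
        Finset.sum_le_sum key
    _ = (∑ v ∈ s, (G.degree v : ℝ) * phi G v) - T + s.card * (T / N) := by
        rw [Finset.sum_add_distrib, Finset.sum_sub_distrib, h2, Finset.sum_const, nsmul_eq_mul]
    _ ≤ (∑ v ∈ s, (G.degree v : ℝ) * phi G v) - T + N * (T / N) := by
        nlinarith [hTN, hcard]
    _ = ∑ v, (G.degree v : ℝ) * phi G v := by
        rw [mul_div_cancel₀ _ hN.ne', sub_add_cancel, h1]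

end WalkLB

open WalkLB
/-- For any finite graph `G` on `n` vertices with average degree `d = 2·e(G)/n`,
the number of walks of length `k` (with starting vertex specified) is at least `n · d^k`. -/
theorem walk_count_lower_bound {V : Type*} [Fintype V] [DecidableEq V]
    (G : SimpleGraph V) [DecidableRel G.Adj] (k : ℕ)
    (n : ℕ) (hn : n = Fintype.card V)
    (d : ℝ) (hd : d = 2 * (G.edgeFinset.card : ℝ) / n) :
    (n : ℝ) * d ^ k ≤ ∑ u : V, ∑ v : V, ((G.finsetWalkLength k u v).card : ℝ) := by
  classical
  by_cases hk0 : k = 0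
  · subst hk0
    have inner : ∀ u : V, ∑ t : V, ((G.finsetWalkLength 0 u t).card : ℝ) = 1 := by
      intro u
      rw [Finset.sum_eq_single u]
      · rw [fwl_zero_self]; simp
      · intro t _ ht; rw [fwl_zero_ne G (Ne.symm ht)]; simp
      · simp
    rw [Finset.sum_congr rfl fun u _ => inner u, Finset.sum_const, Finset.card_univ,
      nsmul_eq_mul, mul_one, pow_zero, mul_one, hn]
  have hk1 : 1 ≤ k := Nat.one_le_iff_ne_zero.mpr hk0
  by_cases hn0 : n = 0
  · rw [hn0]
    simp only [Nat.cast_zero, zero_mul]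
    positivity
  by_cases hE : G.edgeFinset.card = 0
  · have hd0 : d = 0 := by rw [hd, hE]; simp
    rw [hd0, zero_pow hk0, mul_zero]
    positivity
  -- main case
  have hnpos : 0 < n := Nat.pos_of_ne_zero hn0
  have hnR : (0:ℝ) < n := by exact_mod_cast hnpos
  have hcardV : 0 < Fintype.card V := hn ▸ hnpos
  set T : ℝ := ∑ v, (G.degree v : ℝ) with hTdef
  have hTe : T = 2 * (G.edgeFinset.card : ℝ) := by
    rw [hTdef]
    exact_mod_cast congrArg (Nat.cast : ℕ → ℝ) G.sum_degrees_eq_twice_card_edges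
  have hT : 0 < T := by
    rw [hTe]
    have : (0:ℝ) < G.edgeFinset.card := by exact_mod_cast Nat.pos_of_ne_zero hE
    linarith
  have hdTn : d = T / n := by rw [hd, hTe]
  set S : ℝ := ∑ v, (G.degree v : ℝ) * phi G v with hSdef
  set c : ℝ := ((k : ℝ) - 1) * S / T with hc
  -- per-walk bound
  have perwalk : ∀ (u t : V) (p : G.Walk u t), p ∈ G.finsetWalkLength k u t →
      Real.exp c * ((G.degree u : ℝ) * (wwt G p * (1 + (gsum G (phi G) p - phi G t) - c)))
        ≤ 1 := by
    intro u t p hp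
    have hlen : 1 ≤ p.length := by
      rw [SimpleGraph.mem_finsetWalkLength_iff] at hp; omega
    have hid := walk_identity G p hlen
    set X : ℝ := gsum G (phi G) p - phi G t with hX
    have hexp : 1 + X - c ≤ Real.exp (X - c) := by
      have := Real.add_one_le_exp (X - c); linarith
    have h2 : Real.exp c * ((G.degree u : ℝ) * (wwt G p * (1 + X - c)))
        ≤ Real.exp c * ((G.degree u : ℝ) * (wwt G p * Real.exp (X - c))) := by
      refine mul_le_mul_of_nonneg_left ?_ (Real.exp_pos c).le
      refine mul_le_mul_of_nonneg_left ?_ (by positivity)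
      exact mul_le_mul_of_nonneg_left hexp (wwt_nonneg G p)
    have h3 : Real.exp c * ((G.degree u : ℝ) * (wwt G p * Real.exp (X - c)))
        = (G.degree u : ℝ) * (wwt G p * Real.exp X) := by
      have hee : Real.exp c * Real.exp (X - c) = Real.exp X := by
        rw [← Real.exp_add]; ring_nf
      calc Real.exp c * ((G.degree u : ℝ) * (wwt G p * Real.exp (X - c)))
          = (G.degree u : ℝ) * (wwt G p * (Real.exp c * Real.exp (X - c))) := by ring
        _ = (G.degree u : ℝ) * (wwt G p * Real.exp X) := by rw [hee]
    rw [h3] at h2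
    exact h2.trans_eq hid
  have hsplit : ∀ u : V, ∑ t, ∑ p ∈ G.finsetWalkLength k u t,
        wwt G p * (1 + (gsum G (phi G) p - phi G t) - c)
      = aW G k u * (1 - c) + (bW G (phi G) k u - cW G (phi G) k u) := by
    intro u
    rw [aW, bW, cW, Finset.sum_mul, ← Finset.sum_sub_distrib, ← Finset.sum_add_distrib]
    refine Finset.sum_congr rfl fun t _ => ?_
    rw [Finset.sum_mul, ← Finset.sum_sub_distrib, ← Finset.sum_add_distrib]
    exact Finset.sum_congr rfl fun p _ => by ring
  set M : ℝ := ∑ u, (G.degree u : ℝ) *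
    (aW G k u * (1 - c) + (bW G (phi G) k u - cW G (phi G) k u)) with hM
  have hMval : M = T * (1 - c) + ((k : ℝ) * S - S) := by
    rw [hM]
    have e1 : ∀ u : V, (G.degree u : ℝ) *
        (aW G k u * (1 - c) + (bW G (phi G) k u - cW G (phi G) k u))
        = ((G.degree u : ℝ) * aW G k u) * (1 - c) +
          ((G.degree u : ℝ) * bW G (phi G) k u - (G.degree u : ℝ) * cW G (phi G) k u) :=
      fun u => by ring
    rw [Finset.sum_congr rfl fun u _ => e1 u, Finset.sum_add_distrib,
      Finset.sum_sub_distrib, ← Finset.sum_mul, sum_deg_aW, sum_deg_bW, sum_deg_cW]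
  have hMeqT : M = T := by
    rw [hMval, hc]
    field_simp
    ring
  have hbig : Real.exp c * M ≤ ∑ u : V, ∑ v : V, ((G.finsetWalkLength k u v).card : ℝ) := by
    calc Real.exp c * M
        = ∑ u, ∑ t, ∑ p ∈ G.finsetWalkLength k u t,
            Real.exp c * ((G.degree u : ℝ) * (wwt G p * (1 + (gsum G (phi G) p - phi G t) - c))) := by
          rw [hM, Finset.mul_sum]
          refine Finset.sum_congr rfl fun u _ => ?_
          rw [← hsplit u]
          simp_rw [Finset.mul_sum]
      _ ≤ ∑ u : V, ∑ t : V, ∑ _p ∈ G.finsetWalkLength k u t, (1:ℝ) := by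
          refine Finset.sum_le_sum fun u _ => Finset.sum_le_sum fun t _ =>
            Finset.sum_le_sum fun p hp => perwalk u t p hp
      _ = ∑ u : V, ∑ v : V, ((G.finsetWalkLength k u v).card : ℝ) := by simp
  have hclog : ((k : ℝ) - 1) * Real.log (T / n) ≤ c := by
    have hSlog : T * Real.log (T / (Fintype.card V : ℝ)) ≤ S := sum_deg_log G hcardV hT
    have hnc : ((Fintype.card V : ℕ) : ℝ) = (n : ℝ) := by rw [hn]
    rw [hnc] at hSlog
    have hk1' : (0:ℝ) ≤ (k : ℝ) - 1 := by
      have : (1:ℝ) ≤ (k : ℝ) := by exact_mod_cast hk1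
      linarith
    rw [hc, le_div_iff₀ hT]
    nlinarith [hSlog, hk1', hT]
  have hexpc : (T / n) ^ (k - 1) ≤ Real.exp c := by
    have h1 : Real.exp (((k : ℝ) - 1) * Real.log (T / n)) ≤ Real.exp c :=
      Real.exp_le_exp.mpr hclog
    have hk' : ((k : ℝ) - 1) = ((k - 1 : ℕ) : ℝ) := by
      rw [Nat.cast_sub hk1]; simp
    rw [hk', Real.exp_nat_mul, Real.exp_log (div_pos hT hnR)] at h1
    exact h1
  calc (n : ℝ) * d ^ k = T * (T / n) ^ (k - 1) := by
        rw [hdTn, ← Nat.sub_add_cancel hk1, pow_succ]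
        field_simp
        rw [Nat.add_sub_cancel]
    _ ≤ T * Real.exp c := mul_le_mul_of_nonneg_left hexpc hT.le
    _ = Real.exp c * M := by rw [hMeqT]; ring
    _ ≤ _ := hbig
end

section
/- Let 0 < ε < 2/5 and 0 < δ ≤ 1/20. Let Γ be a connected D-regular graph on n vertices such that at least εn vertices v satisfy ‖Q_v^τ − U‖ < 2δ. Then every vertex set X with 4δn ≤ |X| ≤ n/2 satisfies e(X, V(Γ)\X) ≥ (εD/(8τ))·|X|. -/
open Finset
open scoped Classical

/-- The transition matrix of the nearest-neighbor random walk on `G`. -/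
noncomputable def rwStep {V : Type*} [Fintype V] (G : SimpleGraph V) : Matrix V V ℝ :=
  fun u w => if G.Adj u w then (1 : ℝ) / (G.degree u) else 0

/-- The distribution of the nearest-neighbor random walk on `G` after `t` steps
started at `v`:  `rwDist G v t u = Pr[Q_v^t = u]`. -/
noncomputable def rwDist {V : Type*} [Fintype V] (G : SimpleGraph V) (v : V) (t : ℕ) :
    V → ℝ := fun u => (rwStep G ^ t) v u

/-- Total variation distance between two (densities of) distributions on a finite set. -/
noncomputable def tvDist {V : Type*} [Fintype V] (p q : V → ℝ) : ℝ :=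
  (∑ u, |p u - q u|) / 2

/-- The uniform distribution on a finite set. -/
noncomputable def unif (V : Type*) [Fintype V] : V → ℝ :=
  fun _ => 1 / (Fintype.card V)

/-- The number of edges between two disjoint vertex sets. -/
noncomputable def edgesBetween {V : Type*} [Fintype V] (G : SimpleGraph V)
    (X Y : Finset V) : ℕ :=
  ((X ×ˢ Y).filter fun p => G.Adj p.1 p.2).card

section Aux

variable {V : Type*} [Fintype V] {Γ : SimpleGraph V} {D : ℕ}

lemma step_apply (hreg : Γ.IsRegularOfDegree D) (u w : V) :
    rwStep Γ u w = if Γ.Adj u w then (1:ℝ)/D else 0 := by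
  simp [rwStep, hreg u]

lemma step_nonneg (hreg : Γ.IsRegularOfDegree D) (u w : V) : 0 ≤ rwStep Γ u w := by
  rw [step_apply hreg]; positivity

lemma pow_step_nonneg (hreg : Γ.IsRegularOfDegree D) (t : ℕ) (u w : V) :
    0 ≤ (rwStep Γ ^ t) u w := by
  induction t generalizing u w with
  | zero => simp only [pow_zero, Matrix.one_apply]; positivity
  | succ t ih =>
    rw [pow_succ, Matrix.mul_apply]
    exact Finset.sum_nonneg fun k _ => mul_nonneg (ih u k) (step_nonneg hreg k w)

lemma step_row_sum (hreg : Γ.IsRegularOfDegree D) (hD : 0 < D) (u : V) :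
    ∑ w, rwStep Γ u w = 1 := by
  classical
  have h1 : ∑ w, rwStep Γ u w = (Γ.neighborFinset u).card * ((1:ℝ)/D) := by
    rw [Finset.sum_congr rfl (fun w _ => step_apply hreg u w), Finset.sum_ite, Finset.sum_const_zero,
      Finset.sum_const, add_zero, nsmul_eq_mul]
    have hf : univ.filter (fun w => Γ.Adj u w) = Γ.neighborFinset u := by
      ext w; simp [SimpleGraph.mem_neighborFinset]
    rw [hf]
  rw [h1, Γ.card_neighborFinset_eq_degree, hreg u]
  field_simp

lemma step_symm (hreg : Γ.IsRegularOfDegree D) (u w : V) : rwStep Γ u w = rwStep Γ w u := by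
  rw [step_apply hreg, step_apply hreg]
  simp [SimpleGraph.adj_comm]

lemma step_col_sum (hreg : Γ.IsRegularOfDegree D) (hD : 0 < D) (w : V) :
    ∑ u, rwStep Γ u w = 1 := by
  rw [Finset.sum_congr rfl (fun u _ => step_symm hreg u w)]
  exact step_row_sum hreg hD w

lemma pow_step_row_sum (hreg : Γ.IsRegularOfDegree D) (hD : 0 < D) (t : ℕ) (u : V) :
    ∑ w, (rwStep Γ ^ t) u w = 1 := by
  induction t with
  | zero => simp [Matrix.one_apply]
  | succ t ih =>
    simp only [pow_succ, Matrix.mul_apply]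
    rw [Finset.sum_comm]
    calc ∑ k, ∑ w, (rwStep Γ ^ t) u k * rwStep Γ k w
        = ∑ k, (rwStep Γ ^ t) u k * ∑ w, rwStep Γ k w := by
          simp [Finset.mul_sum]
      _ = 1 := by simp only [step_row_sum hreg hD, mul_one]; exact ih

lemma pow_step_col_sum (hreg : Γ.IsRegularOfDegree D) (hD : 0 < D) (t : ℕ) (w : V) :
    ∑ u, (rwStep Γ ^ t) u w = 1 := by
  induction t generalizing w with
  | zero => simp [Matrix.one_apply]
  | succ t ih =>
    simp only [pow_succ, Matrix.mul_apply]
    rw [Finset.sum_comm]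
    calc ∑ k, ∑ u, (rwStep Γ ^ t) u k * rwStep Γ k w
        = ∑ k, (∑ u, (rwStep Γ ^ t) u k) * rwStep Γ k w := by
          simp [Finset.sum_mul]
      _ = 1 := by
          rw [Finset.sum_congr rfl (fun k _ => by rw [ih k, one_mul])]
          exact step_col_sum hreg hD w

lemma escape_bound (hreg : Γ.IsRegularOfDegree D) (hD : 0 < D) (A : Finset V) (τ : ℕ)
    {v : V} (hv : v ∈ A) :
    ∑ w ∈ Aᶜ, (rwStep Γ ^ τ) v w ≤
      ∑ t ∈ Finset.range τ, ∑ u ∈ A, (rwStep Γ ^ t) v u * ∑ w ∈ Aᶜ, rwStep Γ u w := by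
  induction τ with
  | zero =>
    simp only [pow_zero, Matrix.one_apply, Finset.range_zero, Finset.sum_empty]
    rw [Finset.sum_ite_eq]
    simp [hv]
  | succ τ ih =>
    have key : ∑ w ∈ Aᶜ, (rwStep Γ ^ (τ+1)) v w
        = ∑ u ∈ A, (rwStep Γ ^ τ) v u * ∑ w ∈ Aᶜ, rwStep Γ u w
          + ∑ u ∈ Aᶜ, (rwStep Γ ^ τ) v u * ∑ w ∈ Aᶜ, rwStep Γ u w := by
      simp only [pow_succ, Matrix.mul_apply]
      rw [Finset.sum_comm]
      rw [← Finset.sum_add_sum_compl A (fun u => ∑ w ∈ Aᶜ, (rwStep Γ ^ τ) v u * rwStep Γ u w)]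
      simp [Finset.mul_sum]
    rw [key, Finset.sum_range_succ]
    have h2 : ∑ u ∈ Aᶜ, (rwStep Γ ^ τ) v u * ∑ w ∈ Aᶜ, rwStep Γ u w
        ≤ ∑ u ∈ Aᶜ, (rwStep Γ ^ τ) v u := by
      apply Finset.sum_le_sum
      intro u _
      have hc : ∑ w ∈ Aᶜ, rwStep Γ u w ≤ 1 := by
        rw [← step_row_sum hreg hD u]
        exact Finset.sum_le_sum_of_subset_of_nonneg (Finset.subset_univ _)
          (fun w _ _ => step_nonneg hreg u w)
      have := pow_step_nonneg hreg τ v u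
      nlinarith
    linarith [ih]

lemma boundary_sum (hreg : Γ.IsRegularOfDegree D) (A B : Finset V) :
    ∑ u ∈ A, ∑ w ∈ B, rwStep Γ u w = (edgesBetween Γ A B : ℝ) / D := by
  rw [← Finset.sum_product' (f := fun u w => rwStep Γ u w)]
  rw [Finset.sum_congr rfl (fun p _ => step_apply hreg p.1 p.2)]
  rw [Finset.sum_ite, Finset.sum_const_zero, add_zero, Finset.sum_const, nsmul_eq_mul]
  rw [edgesBetween]
  field_simp

lemma sum_escape (hreg : Γ.IsRegularOfDegree D) (hD : 0 < D) (A : Finset V) (τ : ℕ) :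
    ∑ v ∈ A, ∑ w ∈ Aᶜ, (rwStep Γ ^ τ) v w ≤ τ * (edgesBetween Γ A Aᶜ : ℝ) / D := by
  have h1 : ∑ v ∈ A, ∑ w ∈ Aᶜ, (rwStep Γ ^ τ) v w
      ≤ ∑ v ∈ A, ∑ t ∈ Finset.range τ, ∑ u ∈ A, (rwStep Γ ^ t) v u * ∑ w ∈ Aᶜ, rwStep Γ u w :=
    Finset.sum_le_sum fun v hv => escape_bound hreg hD A τ hv
  have h2 : ∑ v ∈ A, ∑ t ∈ Finset.range τ, ∑ u ∈ A, (rwStep Γ ^ t) v u * ∑ w ∈ Aᶜ, rwStep Γ u w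
      = ∑ t ∈ Finset.range τ, ∑ u ∈ A, (∑ v ∈ A, (rwStep Γ ^ t) v u) * ∑ w ∈ Aᶜ, rwStep Γ u w := by
    rw [Finset.sum_comm]
    congr 1; ext t
    rw [Finset.sum_comm]
    simp [Finset.sum_mul]
  have h3 : ∀ t : ℕ, ∑ u ∈ A, (∑ v ∈ A, (rwStep Γ ^ t) v u) * ∑ w ∈ Aᶜ, rwStep Γ u w
      ≤ ∑ u ∈ A, ∑ w ∈ Aᶜ, rwStep Γ u w := by
    intro t
    apply Finset.sum_le_sum
    intro u _
    have hcol : ∑ v ∈ A, (rwStep Γ ^ t) v u ≤ 1 := by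
      rw [← pow_step_col_sum hreg hD t u]
      exact Finset.sum_le_sum_of_subset_of_nonneg (Finset.subset_univ _)
        (fun w _ _ => pow_step_nonneg hreg t w u)
    have hcnn : 0 ≤ ∑ w ∈ Aᶜ, rwStep Γ u w :=
      Finset.sum_nonneg fun w _ => step_nonneg hreg u w
    nlinarith
  calc ∑ v ∈ A, ∑ w ∈ Aᶜ, (rwStep Γ ^ τ) v w
      ≤ ∑ t ∈ Finset.range τ, ∑ u ∈ A, (∑ v ∈ A, (rwStep Γ ^ t) v u) * ∑ w ∈ Aᶜ, rwStep Γ u w := by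
        rw [← h2]; exact h1
    _ ≤ ∑ t ∈ Finset.range τ, ∑ u ∈ A, ∑ w ∈ Aᶜ, rwStep Γ u w :=
        Finset.sum_le_sum fun t _ => h3 t
    _ = τ * (edgesBetween Γ A Aᶜ : ℝ) / D := by
        rw [Finset.sum_const, Finset.card_range, nsmul_eq_mul, boundary_sum hreg, mul_div_assoc]

lemma edgesBetween_comm (G : SimpleGraph V) (A B : Finset V) :
    edgesBetween G A B = edgesBetween G B A := by
  unfold edgesBetween
  apply Finset.card_bij (fun p _ => (p.2, p.1))
  · intro p hp
    simp only [Finset.mem_filter, Finset.mem_product] at hp ⊢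
    exact ⟨⟨hp.1.2, hp.1.1⟩, hp.2.symm⟩
  · intro p hp q hq h
    simp only [Prod.ext_iff] at h ⊢
    exact ⟨h.2, h.1⟩
  · intro p hp
    simp only [Finset.mem_filter, Finset.mem_product] at hp
    exact ⟨(p.2, p.1), by simp [Finset.mem_filter, Finset.mem_product, hp.1.1, hp.1.2, hp.2.symm]⟩

lemma tv_lower (p q : V → ℝ) (h : ∑ u, p u = ∑ u, q u) (A : Finset V) :
    ∑ u ∈ A, q u - ∑ u ∈ A, p u ≤ tvDist p q := by
  have hsplit : (∑ u ∈ A, (q u - p u)) + (∑ u ∈ Aᶜ, (q u - p u)) = 0 := by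
    rw [Finset.sum_add_sum_compl]
    rw [Finset.sum_sub_distrib, h, sub_self]
  have h1 : ∑ u ∈ A, (q u - p u) ≤ ∑ u ∈ A, |p u - q u| :=
    Finset.sum_le_sum fun u _ => by rw [abs_sub_comm]; exact le_abs_self _
  have h2 : ∑ u ∈ Aᶜ, (p u - q u) ≤ ∑ u ∈ Aᶜ, |p u - q u| :=
    Finset.sum_le_sum fun u _ => le_abs_self _
  have htot : (∑ u ∈ A, |p u - q u|) + (∑ u ∈ Aᶜ, |p u - q u|) = ∑ u, |p u - q u| :=
    Finset.sum_add_sum_compl A _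
  have h3 : ∑ u ∈ Aᶜ, (p u - q u) = - ∑ u ∈ Aᶜ, (q u - p u) := by
    rw [← Finset.sum_neg_distrib]; congr 1; ext u; ring
  have h4 : ∑ u ∈ A, q u - ∑ u ∈ A, p u = ∑ u ∈ A, (q u - p u) := by
    rw [Finset.sum_sub_distrib]
  rw [tvDist, h4]
  linarith

lemma unif_sum (A : Finset V) :
    ∑ u ∈ A, unif V u = (A.card : ℝ) / (Fintype.card V) := by
  simp only [unif, Finset.sum_const, nsmul_eq_mul]
  ring

end Aux

set_option maxHeartbeats 1000000 in
/-- If `Γ` is a connected `D`-regular graph in which at least `εn` vertices `v` satisfy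
`‖Q_v^τ − U‖ < 2δ` (with `0 < ε < 2/5`, `0 < δ ≤ 1/20`), then every vertex set `X` with
`4δn ≤ |X| ≤ n/2` satisfies `e(X, V∖X) ≥ (εD/(8τ))·|X|`. -/
theorem expansion_of_many_mixing_connected {V : Type*} [Fintype V]
    (Γ : SimpleGraph V) (hconn : Γ.Connected) (D : ℕ) (hreg : Γ.IsRegularOfDegree D)
    (n : ℕ) (hn : n = Fintype.card V) (τ : ℕ) (hτ : 0 < τ)
    (ε δ : ℝ) (hε : 0 < ε) (hε' : ε < 2 / 5) (hδ : 0 < δ) (hδ' : δ ≤ 1 / 20)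
    (hmix : ε * n ≤
      ((Finset.univ.filter fun v : V =>
          tvDist (rwDist Γ v τ) (unif V) < 2 * δ).card : ℝ)) :
    ∀ X : Finset V, 4 * δ * n ≤ (X.card : ℝ) → (X.card : ℝ) ≤ n / 2 →
      ε * D / (8 * τ) * X.card ≤ (edgesBetween Γ X Xᶜ : ℝ) := by
  classical
  intro X hX1 hX2
  by_cases hXe : X = ∅
  · subst hXe
    simp only [Finset.card_empty, Nat.cast_zero, mul_zero]
    positivity
  -- basic positivity facts
  have hX0 : 0 < X.card := Finset.card_pos.2 (Finset.nonempty_of_ne_empty hXe)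
  have hx1 : (1:ℝ) ≤ X.card := by exact_mod_cast hX0
  have hnR : (2:ℝ) ≤ n := by linarith
  have hn0 : (0:ℝ) < n := by linarith
  have hnN : 2 ≤ n := by exact_mod_cast hnR
  have hcardV : 1 < Fintype.card V := by omega
  have hD : 0 < D := by
    obtain ⟨u, w, huw⟩ := Fintype.exists_pair_of_one_lt_card hcardV
    obtain ⟨walk⟩ := hconn.preconnected u w
    cases walk with
    | nil => exact absurd rfl huw
    | cons hadj _ =>
      have : 0 < Γ.degree u := by
        rw [SimpleGraph.degree_pos_iff_exists_adj]
        exact ⟨_, hadj⟩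
      rwa [hreg u] at this
  have hDR : (0:ℝ) < D := by exact_mod_cast hD
  have hτR : (0:ℝ) < τ := by exact_mod_cast hτ
  set S : Finset V := Finset.univ.filter fun v : V =>
      tvDist (rwDist Γ v τ) (unif V) < 2 * δ with hS
  set x : ℝ := (X.card : ℝ)
  set e : ℝ := (edgesBetween Γ X Xᶜ : ℝ)
  have he0 : 0 ≤ e := Nat.cast_nonneg _
  -- sums to one
  have hQsum : ∀ v : V, ∑ u, rwDist Γ v τ u = ∑ u, unif V u := by
    intro v
    have h1 : ∑ u, rwDist Γ v τ u = 1 := pow_step_row_sum hreg hD τ v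
    have h2 : ∑ u, unif V u = 1 := by
      rw [← Finset.sum_compl_add_sum (∅ : Finset V)]
      simp only [Finset.compl_empty]
      rw [unif_sum]
      simp only [Finset.sum_empty, add_zero, Finset.card_univ]
      field_simp
    rw [h1, h2]
  -- cardinality of complement
  have hXc : ((Xᶜ : Finset V).card : ℝ) = n - x := by
    rw [Finset.card_compl]
    have hle : X.card ≤ Fintype.card V := Finset.card_le_univ X
    push_cast [Nat.cast_sub hle]
    rw [← hn]
  -- mixing vertices' mass bounds
  have hmass : ∀ (A : Finset V) (v : V), v ∈ S →
      (A.card : ℝ) / n - 2 * δ < ∑ w ∈ A, rwDist Γ v τ w := by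
    intro A v hv
    have hvS : tvDist (rwDist Γ v τ) (unif V) < 2 * δ := (Finset.mem_filter.mp hv).2
    have := tv_lower (rwDist Γ v τ) (unif V) (hQsum v) A
    rw [unif_sum, ← hn] at this
    linarith
  -- split S
  have hcardsplit : ((S ∩ X).card : ℝ) + ((S ∩ Xᶜ).card : ℝ) = (S.card : ℝ) := by
    have h1 : S ∩ Xᶜ = S \ X := by
      ext v; simp [Finset.mem_sdiff]
    rw [h1]
    exact_mod_cast congrArg (Nat.cast (R := ℝ)) (Finset.card_inter_add_card_sdiff S X)
  -- the key inequality we will establish: ε * x / 8 ≤ τ * e / D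
  have key : ε * x / 8 ≤ τ * e / D := by
    by_cases hcase : ε * n / 2 ≤ ((S ∩ X).card : ℝ)
    · -- many mixing vertices inside X
      have hterm : ∀ v ∈ S ∩ X, (2:ℝ)/5 ≤ ∑ w ∈ Xᶜ, (rwStep Γ ^ τ) v w := by
        intro v hv
        have h := hmass Xᶜ v (Finset.mem_of_mem_inter_left hv)
        rw [hXc] at h
        have hfrac : (1:ℝ)/2 ≤ (n - x)/n := by
          rw [le_div_iff₀ hn0]; linarith
        have : (2:ℝ)/5 ≤ (n - x)/n - 2*δ := by linarith
        calc (2:ℝ)/5 ≤ (n - x)/n - 2*δ := this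
          _ ≤ ∑ w ∈ Xᶜ, rwDist Γ v τ w := le_of_lt h
          _ = ∑ w ∈ Xᶜ, (rwStep Γ ^ τ) v w := rfl
      have hlb : ((S ∩ X).card : ℝ) * (2/5) ≤ ∑ v ∈ S ∩ X, ∑ w ∈ Xᶜ, (rwStep Γ ^ τ) v w := by
        rw [mul_comm]
        calc (2/5 : ℝ) * ((S ∩ X).card : ℝ) = ∑ _v ∈ S ∩ X, (2/5 : ℝ) := by
              rw [Finset.sum_const, nsmul_eq_mul, mul_comm]
          _ ≤ ∑ v ∈ S ∩ X, ∑ w ∈ Xᶜ, (rwStep Γ ^ τ) v w := Finset.sum_le_sum hterm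
      have hsub : ∑ v ∈ S ∩ X, ∑ w ∈ Xᶜ, (rwStep Γ ^ τ) v w
          ≤ ∑ v ∈ X, ∑ w ∈ Xᶜ, (rwStep Γ ^ τ) v w :=
        Finset.sum_le_sum_of_subset_of_nonneg (Finset.inter_subset_right)
          (fun v _ _ => Finset.sum_nonneg fun w _ => pow_step_nonneg hreg τ v w)
      have hub := sum_escape hreg hD X τ
      have hchain : ε * n / 2 * (2/5) ≤ τ * e / D := by
        calc ε * n / 2 * (2/5) ≤ ((S ∩ X).card : ℝ) * (2/5) := by nlinarith
          _ ≤ τ * e / D := le_trans hlb (le_trans hsub hub)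
      nlinarith
    · -- many mixing vertices outside X
      have hcase2 : ε * n / 2 ≤ ((S ∩ Xᶜ).card : ℝ) := by
        push_neg at hcase
        linarith [hmix, hcardsplit]
      have hterm : ∀ v ∈ S ∩ Xᶜ, x / (2*n) ≤ ∑ w ∈ X, (rwStep Γ ^ τ) v w := by
        intro v hv
        have h := hmass X v (Finset.mem_of_mem_inter_left hv)
        have hdelta : 2 * δ ≤ x / (2*n) := by
          rw [le_div_iff₀ (by linarith)]
          nlinarith
        have hx2 : x / (2*n) = x / n - x / (2*n) := by field_simp; ring
        calc x / (2*n) = x / n - x / (2*n) := hx2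
          _ ≤ x / n - 2*δ := by linarith
          _ ≤ ∑ w ∈ X, rwDist Γ v τ w := le_of_lt h
          _ = ∑ w ∈ X, (rwStep Γ ^ τ) v w := rfl
      have hlb : ((S ∩ Xᶜ).card : ℝ) * (x/(2*n)) ≤ ∑ v ∈ S ∩ Xᶜ, ∑ w ∈ X, (rwStep Γ ^ τ) v w := by
        calc ((S ∩ Xᶜ).card : ℝ) * (x/(2*n)) = ∑ _v ∈ S ∩ Xᶜ, (x/(2*n)) := by
              rw [Finset.sum_const, nsmul_eq_mul]
          _ ≤ ∑ v ∈ S ∩ Xᶜ, ∑ w ∈ X, (rwStep Γ ^ τ) v w := Finset.sum_le_sum hterm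
      have hsub : ∑ v ∈ S ∩ Xᶜ, ∑ w ∈ X, (rwStep Γ ^ τ) v w
          ≤ ∑ v ∈ Xᶜ, ∑ w ∈ X, (rwStep Γ ^ τ) v w :=
        Finset.sum_le_sum_of_subset_of_nonneg (Finset.inter_subset_right)
          (fun v _ _ => Finset.sum_nonneg fun w _ => pow_step_nonneg hreg τ v w)
      have hub : ∑ v ∈ Xᶜ, ∑ w ∈ X, (rwStep Γ ^ τ) v w ≤ τ * e / D := by
        have := sum_escape hreg hD Xᶜ τ
        rw [compl_compl, edgesBetween_comm Γ Xᶜ X] at this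
        exact this
      have hchain : ε * n / 2 * (x/(2*n)) ≤ τ * e / D := by
        have hpos : (0:ℝ) ≤ x/(2*n) := div_nonneg (by linarith) (by linarith)
        calc ε * n / 2 * (x/(2*n)) ≤ ((S ∩ Xᶜ).card : ℝ) * (x/(2*n)) :=
              mul_le_mul_of_nonneg_right hcase2 hpos
          _ ≤ τ * e / D := le_trans hlb (le_trans hsub hub)
      have heq : ε * n / 2 * (x/(2*n)) = ε * x / 4 := by field_simp; ring
      rw [heq] at hchain
      nlinarith
  -- conclude
  rw [div_mul_eq_mul_div, div_le_iff₀ (by positivity)]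
  rw [div_le_div_iff₀ (by norm_num) hDR] at key
  nlinarith
end

section
/- Let 0 < ε < 2/5 and 0 < δ ≤ 1/30. Let Γ be a D-regular graph on n vertices such that at least εn vertices v satisfy ‖Q_v^τ − U‖ < δ. Then Γ has no separator of size smaller than (ε/(48τ))·n; that is, for every vertex set S with |S| < εn/(48τ), some connected component of Γ − S has more than 2n/3 vertices. -/
open Finset
open scoped Classical

lemma pow_entry_nonneg {V : Type*} [Fintype V] (P : Matrix V V ℝ)
    (hP0 : ∀ u w, 0 ≤ P u w) : ∀ t u w, 0 ≤ (P ^ t) u w := by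
  intro t
  induction t with
  | zero => intro u w; simp [Matrix.one_apply]; positivity
  | succ t ih =>
      intro u w
      rw [pow_succ', Matrix.mul_apply]
      exact Finset.sum_nonneg fun j _ => mul_nonneg (hP0 _ _) (ih _ _)

lemma pow_row_sum {V : Type*} [Fintype V] (P : Matrix V V ℝ)
    (hProw : ∀ u, ∑ w, P u w = 1) : ∀ t u, ∑ w, (P ^ t) u w = 1 := by
  intro t
  induction t with
  | zero => intro u; simp [Matrix.one_apply]
  | succ t ih =>
      intro u
      simp only [pow_succ', Matrix.mul_apply]
      rw [Finset.sum_comm]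
      calc ∑ j, ∑ w, P u j * (P ^ t) j w
          = ∑ j, P u j * ∑ w, (P ^ t) j w := by
            simp [Finset.mul_sum]
        _ = 1 := by simp [ih, hProw]

lemma escape_lemma {V : Type*} [Fintype V] (P : Matrix V V ℝ)
    (hP0 : ∀ u w, 0 ≤ P u w) (hProw : ∀ u, ∑ w, P u w = 1)
    (A B S : Finset V) (hcover : ∀ w, w ∈ A ∨ w ∈ B ∨ w ∈ S)
    (hadj : ∀ a ∈ A, ∀ b ∈ B, P a b = 0) :
    ∀ t v, (∑ u ∈ B, (P ^ t) v u) ≤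
      (∑ s ∈ Finset.range (t + 1), ∑ u ∈ S, (P ^ s) v u) + (if v ∈ B then 1 else 0) := by
  intro t
  induction t with
  | zero =>
      intro v
      have h1 : (∑ u ∈ B, (P ^ 0) v u) = (if v ∈ B then 1 else 0) := by
        simp [Matrix.one_apply, Finset.sum_ite_eq]
      have h2 : (0:ℝ) ≤ ∑ s ∈ Finset.range 1, ∑ u ∈ S, (P ^ s) v u := by
        apply Finset.sum_nonneg; intro s _
        exact Finset.sum_nonneg fun u _ => pow_entry_nonneg P hP0 _ _ _
      linarith [h1, h2]
  | succ t ih =>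
      intro v
      have key : (∑ u ∈ B, (P ^ (t+1)) v u)
          = ∑ w, P v w * (∑ u ∈ B, (P ^ t) w u) := by
        simp only [pow_succ', Matrix.mul_apply]
        rw [Finset.sum_comm]
        simp [Finset.mul_sum]
      have step1 : (∑ u ∈ B, (P ^ (t+1)) v u)
          ≤ ∑ w, P v w * ((∑ s ∈ Finset.range (t + 1), ∑ u ∈ S, (P ^ s) w u)
              + (if w ∈ B then 1 else 0)) := by
        rw [key]
        apply Finset.sum_le_sum
        intro w _
        exact mul_le_mul_of_nonneg_left (ih w) (hP0 v w)
      have expand : (∑ w, P v w * ((∑ s ∈ Finset.range (t + 1), ∑ u ∈ S, (P ^ s) w u)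
              + (if w ∈ B then 1 else 0)))
          = (∑ s ∈ Finset.range (t + 1), ∑ u ∈ S, (P ^ (s+1)) v u)
            + ∑ w ∈ B, P v w := by
        simp only [mul_add]
        rw [Finset.sum_add_distrib]
        congr 1
        · calc ∑ w, P v w * ∑ s ∈ Finset.range (t+1), ∑ u ∈ S, (P ^ s) w u
              = ∑ w, ∑ s ∈ Finset.range (t+1), ∑ u ∈ S, P v w * (P ^ s) w u := by
                simp [Finset.mul_sum]
            _ = ∑ s ∈ Finset.range (t+1), ∑ w, ∑ u ∈ S, P v w * (P ^ s) w u :=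
                Finset.sum_comm
            _ = ∑ s ∈ Finset.range (t+1), ∑ u ∈ S, ∑ w, P v w * (P ^ s) w u :=
                Finset.sum_congr rfl fun s _ => Finset.sum_comm
            _ = ∑ s ∈ Finset.range (t+1), ∑ u ∈ S, (P ^ (s+1)) v u := by
                apply Finset.sum_congr rfl
                intro s _
                apply Finset.sum_congr rfl
                intro u _
                rw [pow_succ', Matrix.mul_apply]
        · simp only [mul_ite, mul_one, mul_zero]
          rw [Finset.sum_ite_mem]
          simp
      have last : (∑ w ∈ B, P v w) ≤ (∑ u ∈ S, (P ^ 0) v u) + (if v ∈ B then 1 else 0) := by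
        rcases hcover v with hv | hv | hv
        · have : (∑ w ∈ B, P v w) = 0 := Finset.sum_eq_zero fun w hw => hadj v hv w hw
          have h2 : (0:ℝ) ≤ ∑ u ∈ S, (P ^ 0) v u :=
            Finset.sum_nonneg fun u _ => pow_entry_nonneg P hP0 _ _ _
          rw [this]
          positivity
        · have : (∑ w ∈ B, P v w) ≤ ∑ w, P v w :=
            Finset.sum_le_sum_of_subset_of_nonneg (Finset.subset_univ B)
              (fun w _ _ => hP0 v w)
          have h2 : (0:ℝ) ≤ ∑ u ∈ S, (P ^ 0) v u :=
            Finset.sum_nonneg fun u _ => pow_entry_nonneg P hP0 _ _ _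
          rw [hProw v] at this
          simp only [if_pos hv]
          linarith
        · have : (∑ w ∈ B, P v w) ≤ ∑ w, P v w :=
            Finset.sum_le_sum_of_subset_of_nonneg (Finset.subset_univ B)
              (fun w _ _ => hP0 v w)
          rw [hProw v] at this
          have h2 : (∑ u ∈ S, (P ^ 0) v u) = 1 := by
            simp [Matrix.one_apply, Finset.sum_ite_eq, hv]
          rw [h2]
          have : (0:ℝ) ≤ (if v ∈ B then (1:ℝ) else 0) := by positivity
          linarith
      have reindex : (∑ s ∈ Finset.range (t + 2), ∑ u ∈ S, (P ^ s) v u)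
          = (∑ s ∈ Finset.range (t + 1), ∑ u ∈ S, (P ^ (s+1)) v u)
            + ∑ u ∈ S, (P ^ 0) v u := by
        exact Finset.sum_range_succ' (fun s => ∑ u ∈ S, (P ^ s) v u) (t+1)
      rw [expand] at step1
      rw [show t + 1 + 1 = t + 2 from rfl, reindex]
      linarith


lemma select_lemma {ι : Type*} [Fintype ι] (c : ι → ℝ) (hc : ∀ i, 0 ≤ c i)
    (B₀ : ℝ) (hB₀ : 0 ≤ B₀) (hK : ∀ i, c i ≤ B₀) (hN : ∑ i, c i ≤ (3/2) * B₀) :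
    ∃ I : Finset ι, (∑ i ∈ I, c i) ≤ B₀ ∧ (∑ i, c i) - (∑ i ∈ I, c i) ≤ B₀ := by
  set 𝒮 : Finset (Finset ι) :=
    Finset.univ.filter (fun I : Finset ι => ∑ i ∈ I, c i ≤ B₀) with h𝒮
  have hne : 𝒮.Nonempty := ⟨∅, by simp [h𝒮, hB₀]⟩
  obtain ⟨I, hI𝒮, hImax⟩ := Finset.exists_max_image 𝒮 (fun I => ∑ i ∈ I, c i) hne
  have hIle : ∑ i ∈ I, c i ≤ B₀ := by
    simpa [h𝒮] using hI𝒮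
  refine ⟨I, hIle, ?_⟩
  by_contra hcon
  push_neg at hcon
  -- the complement has positive total, so there is j ∉ I with c j > 0
  have hcompl : (0:ℝ) < ∑ i ∈ Finset.univ \ I, c i := by
    have : ∑ i ∈ Finset.univ \ I, c i = (∑ i, c i) - ∑ i ∈ I, c i :=
      Finset.sum_sdiff_eq_sub (Finset.subset_univ I)
    rw [this]; linarith
  obtain ⟨j, hjmem, hj⟩ : ∃ j ∈ Finset.univ \ I, 0 < c j := by
    by_contra h
    push_neg at h
    have : ∑ i ∈ Finset.univ \ I, c i ≤ 0 :=
      Finset.sum_nonpos fun i hi => h i hi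
    linarith
  have hjI : j ∉ I := (Finset.mem_sdiff.mp hjmem).2
  -- adding j must violate the constraint
  have hviol : B₀ < ∑ i ∈ I, c i + c j := by
    by_contra h
    push_neg at h
    have hmem : insert j I ∈ 𝒮 := by
      simp only [h𝒮, Finset.mem_filter, Finset.mem_univ, true_and]
      rw [Finset.sum_insert hjI]
      linarith
    have := hImax _ hmem
    rw [Finset.sum_insert hjI] at this
    linarith
  -- {j} is feasible, so c j ≤ ∑_I c
  have hjfeas : ({j} : Finset ι) ∈ 𝒮 := by
    simp [h𝒮, hK j]
  have hjle : c j ≤ ∑ i ∈ I, c i := by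
    have := hImax _ hjfeas
    simpa using this
  have h1 : B₀ / 2 < ∑ i ∈ I, c i := by linarith
  have : (∑ i, c i) = (∑ i ∈ I, c i) + ∑ i ∈ Finset.univ \ I, c i := by
    rw [Finset.sum_sdiff_eq_sub (Finset.subset_univ I)]; ring
  have h2 : (∑ i ∈ Finset.univ \ I, c i) = (∑ i, c i) - ∑ i ∈ I, c i :=
    Finset.sum_sdiff_eq_sub (Finset.subset_univ I)
  linarith

set_option maxHeartbeats 3200000

/-- If `Γ` is `D`-regular and at least `εn` vertices `v` satisfy `‖Q_v^τ − U‖ < δ`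
(with `0 < ε < 2/5`, `0 < δ ≤ 1/30`), then `Γ` has no separator of size smaller than
`εn/(48τ)`: removing any vertex set `S` with `|S| < εn/(48τ)` leaves a connected
component with more than `2n/3` vertices. -/
theorem no_small_separator {V : Type*} [Fintype V]
    (Γ : SimpleGraph V) (D : ℕ) (hreg : Γ.IsRegularOfDegree D)
    (n : ℕ) (hn : n = Fintype.card V) (τ : ℕ) (hτ : 0 < τ)
    (ε δ : ℝ) (hε : 0 < ε) (hε' : ε < 2 / 5) (hδ : 0 < δ) (hδ' : δ ≤ 1 / 30)
    (hmix : ε * n ≤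
      ((Finset.univ.filter fun v : V =>
          tvDist (rwDist Γ v τ) (unif V) < δ).card : ℝ)) :
    ∀ S : Finset V, (S.card : ℝ) < ε * n / (48 * τ) →
      ∃ C : (Γ.induce ((↑S : Set V)ᶜ)).ConnectedComponent,
        2 * (n : ℝ) / 3 < (C.supp.ncard : ℝ) := by
  intro S hS
  -- trivial case n = 0
  rcases Nat.eq_zero_or_pos n with hn0 | hn0
  · exfalso
    rw [hn0] at hS
    have : (0:ℝ) ≤ (S.card : ℝ) := Nat.cast_nonneg _
    simp only [Nat.cast_zero, mul_zero, zero_div] at hS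
    linarith
  have hnpos : (0:ℝ) < n := by exact_mod_cast hn0
  have hτ1 : (1:ℝ) ≤ τ := by exact_mod_cast hτ
  -- degenerate case D = 0
  rcases Nat.eq_zero_or_pos D with hD0 | hDpos
  · exfalso
    have hP0 : rwStep Γ = 0 := by
      funext u w
      simp only [rwStep, Matrix.zero_apply]
      split
      · rw [hreg u, hD0]; norm_num
      · rfl
    have hcard : (Fintype.card V : ℝ) ≠ 0 := by
      rw [← hn]; positivity
    have htv : ∀ v : V, tvDist (rwDist Γ v τ) (unif V) = 1/2 := by
      intro v
      have hd : rwDist Γ v τ = fun _ => 0 := by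
        funext u
        simp only [rwDist, hP0, zero_pow hτ.ne', Matrix.zero_apply]
      rw [hd]
      simp only [tvDist, unif, zero_sub, abs_neg]
      rw [abs_of_nonneg (by positivity : (0:ℝ) ≤ 1 / (Fintype.card V : ℝ))]
      rw [Finset.sum_const, Finset.card_univ, nsmul_eq_mul]
      field_simp
    have hempty : (Finset.univ.filter fun v : V =>
        tvDist (rwDist Γ v τ) (unif V) < δ) = ∅ := by
      apply Finset.filter_false_of_mem
      intro v _
      rw [htv v]
      linarith
    rw [hempty] at hmix
    simp at hmix
    nlinarith
  -- main case
  set P := rwStep Γ with hPdef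
  have hP0 : ∀ u w, 0 ≤ P u w := by
    intro u w
    simp only [hPdef, rwStep]
    split
    · positivity
    · exact le_refl 0
  have hProw : ∀ u, ∑ w, P u w = 1 := by
    intro u
    have e : ∀ w, P u w = if w ∈ Γ.neighborFinset u then (1/(D:ℝ)) else 0 := by
      intro w
      simp only [hPdef, rwStep, SimpleGraph.mem_neighborFinset, hreg u]
    simp only [e]
    rw [Finset.sum_ite_mem, Finset.univ_inter, Finset.sum_const,
      SimpleGraph.card_neighborFinset_eq_degree, hreg u, nsmul_eq_mul]
    have : (D:ℝ) ≠ 0 := by positivity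
    field_simp
  have hPsym : ∀ u w, P u w = P w u := by
    intro u w
    simp only [hPdef, rwStep]
    by_cases h : Γ.Adj u w
    · rw [if_pos h, if_pos h.symm, hreg u, hreg w]
    · rw [if_neg h, if_neg (fun h' => h h'.symm)]
  have hPcol : ∀ (t : ℕ) (u : V), ∑ v, (P ^ t) v u = 1 := by
    intro t u
    have hsymM : P.transpose = P := by
      ext i j; simp only [Matrix.transpose_apply]; exact hPsym j i
    have hsymt : (P ^ t).transpose = P ^ t := by rw [Matrix.transpose_pow, hsymM]
    calc ∑ v, (P ^ t) v u = ∑ v, (P ^ t).transpose u v := rfl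
      _ = ∑ v, (P ^ t) u v := by rw [hsymt]
      _ = 1 := pow_row_sum P hProw t u
  -- numeric bound on |S|
  have hScard : (S.card:ℝ) * (48 * τ) < ε * n := by
    have h48τ : (0:ℝ) < 48 * τ := by positivity
    rw [lt_div_iff₀ h48τ] at hS
    exact hS
  have hSnonneg : (0:ℝ) ≤ S.card := Nat.cast_nonneg _
  have hS120 : (S.card:ℝ) < n / 120 := by nlinarith
  -- by contradiction: all components small
  by_contra hno
  push_neg at hno
  -- components setup
  set Ωg := Γ.induce ((↑S : Set V)ᶜ) with hΩg
  haveI : Fintype ((↑S : Set V)ᶜ : Set V) := Fintype.ofFinite _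
  haveI : Fintype Ωg.ConnectedComponent := Fintype.ofFinite _
  set F : Ωg.ConnectedComponent → Finset V := fun C =>
    Finset.univ.filter (fun v =>
      ∃ hv : v ∈ ((↑S : Set V)ᶜ), Ωg.connectedComponentMk ⟨v, hv⟩ = C) with hF
  have hF_mem : ∀ (v : V) (C : Ωg.ConnectedComponent),
      v ∈ F C ↔ ∃ hv : v ∈ ((↑S : Set V)ᶜ), Ωg.connectedComponentMk ⟨v, hv⟩ = C := by
    intro v C
    simp [hF]
  have hF_notS : ∀ (v : V) (C : Ωg.ConnectedComponent), v ∈ F C → v ∉ S := by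
    intro v C hv
    obtain ⟨h1, _⟩ := (hF_mem v C).mp hv
    simpa using h1
  have hF_disj : ∀ (C C' : Ωg.ConnectedComponent), C ≠ C' → Disjoint (F C) (F C') := by
    intro C C' hne
    rw [Finset.disjoint_left]
    intro v hv hv'
    obtain ⟨h1, e1⟩ := (hF_mem v C).mp hv
    obtain ⟨h2, e2⟩ := (hF_mem v C').mp hv'
    exact hne (e1 ▸ e2 ▸ rfl)
  have hF_card : ∀ C : Ωg.ConnectedComponent, (F C).card = C.supp.ncard := by
    intro C
    haveI : Fintype (C.supp) := Fintype.ofFinite _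
    rw [Set.ncard_eq_toFinset_card']
    have him : F C = C.supp.toFinset.image Subtype.val := by
      ext v
      simp only [Finset.mem_image, Set.mem_toFinset,
        SimpleGraph.ConnectedComponent.mem_supp_iff, hF_mem]
      constructor
      · rintro ⟨hv, e⟩
        exact ⟨⟨v, hv⟩, e, rfl⟩
      · rintro ⟨⟨x, hx⟩, hmk, rfl⟩
        exact ⟨hx, hmk⟩
    rw [him, Finset.card_image_of_injective _ Subtype.val_injective]
  have hF_cover : ∀ (v : V) (hv : v ∈ ((↑S : Set V)ᶜ)),
      v ∈ F (Ωg.connectedComponentMk ⟨v, hv⟩) := by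
    intro v hv
    rw [hF_mem]
    exact ⟨hv, rfl⟩
  have hmemcompl : ∀ v : V, v ∉ S → v ∈ ((↑S : Set V)ᶜ) := by
    intro v hv
    simpa using hv
  -- total size of components
  have hbiUnion : Finset.univ.biUnion F = Finset.univ \ S := by
    ext v
    simp only [Finset.mem_biUnion, Finset.mem_sdiff, Finset.mem_univ, true_and]
    constructor
    · rintro ⟨C, hv⟩
      exact hF_notS v C hv
    · intro hv
      exact ⟨_, hF_cover v (hmemcompl v hv)⟩
  have h3 : S.card ≤ n := by
    rw [hn]
    exact (Finset.card_le_card (Finset.subset_univ S)).trans_eq Finset.card_univ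
  have htotal : ∑ C, ((F C).card : ℝ) = (n : ℝ) - S.card := by
    have h1 : ∑ C, (F C).card = n - S.card := by
      rw [← Finset.card_biUnion (fun C _ C' _ h => hF_disj C C' h), hbiUnion,
        Finset.card_sdiff_of_subset (Finset.subset_univ S), Finset.card_univ, hn]
    calc ∑ C, ((F C).card : ℝ) = ((∑ C, (F C).card : ℕ) : ℝ) := by push_cast; rfl
      _ = (n : ℝ) - S.card := by rw [h1, Nat.cast_sub h3]
  -- select a balanced split
  obtain ⟨I, hI1, hI2⟩ := select_lemma (fun C => ((F C).card : ℝ))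
    (fun C => Nat.cast_nonneg _) (2 * n / 3) (by positivity)
    (fun C => by simp only [hF_card C]; exact hno C)
    (by rw [htotal]; nlinarith)
  rw [htotal] at hI2
  set A : Finset V := I.biUnion F with hA
  set B : Finset V := (Finset.univ \ S) \ A with hB
  have hAcard : (A.card : ℝ) = ∑ C ∈ I, ((F C).card : ℝ) := by
    rw [hA, Finset.card_biUnion (fun C _ C' _ h => hF_disj C C' h)]
    push_cast
    rfl
  have hA_sub : A ⊆ Finset.univ \ S := by
    intro v hv
    rw [hA, Finset.mem_biUnion] at hv
    obtain ⟨C, _, hv⟩ := hv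
    simp only [Finset.mem_sdiff, Finset.mem_univ, true_and]
    exact hF_notS v C hv
  have hBcard : (B.card : ℝ) = ((n:ℝ) - S.card) - A.card := by
    rw [hB, Finset.card_sdiff_of_subset hA_sub]
    have h4 : (Finset.univ \ S).card = n - S.card := by
      rw [Finset.card_sdiff_of_subset (Finset.subset_univ S), Finset.card_univ, hn]
    rw [h4]
    have h5 : A.card ≤ n - S.card := h4 ▸ Finset.card_le_card hA_sub
    rw [Nat.cast_sub h5, Nat.cast_sub h3]
  have hAlow : (n:ℝ)/3 - S.card ≤ A.card := by rw [hAcard]; linarith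
  have hBlow : (n:ℝ)/3 - S.card ≤ B.card := by rw [hBcard, hAcard]; linarith
  have hcover : ∀ w : V, w ∈ A ∨ w ∈ B ∨ w ∈ S := by
    intro w
    by_cases hw : w ∈ S
    · exact Or.inr (Or.inr hw)
    by_cases hw' : w ∈ A
    · exact Or.inl hw'
    · refine Or.inr (Or.inl ?_)
      rw [hB]
      simp only [Finset.mem_sdiff, Finset.mem_univ, true_and]
      exact ⟨hw, hw'⟩
  have hdisjAB : ∀ a ∈ A, ∀ b ∈ B, P a b = 0 := by
    intro a ha b hb
    rw [hB, Finset.mem_sdiff] at hb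
    obtain ⟨hb1, hb2⟩ := hb
    rw [Finset.mem_sdiff] at hb1
    by_cases hadj : Γ.Adj a b
    · exfalso
      rw [hA, Finset.mem_biUnion] at ha
      obtain ⟨C, hCI, haC⟩ := ha
      obtain ⟨ha', e⟩ := (hF_mem a C).mp haC
      have hb' : b ∈ ((↑S : Set V)ᶜ) := hmemcompl b hb1.2
      have hadj' : Ωg.Adj ⟨a, ha'⟩ ⟨b, hb'⟩ := hadj
      have : Ωg.connectedComponentMk ⟨b, hb'⟩ = C := by
        rw [← e]
        exact (SimpleGraph.ConnectedComponent.sound hadj'.reachable).symm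
      have : b ∈ F C := (hF_mem b C).mpr ⟨hb', this⟩
      exact hb2 (Finset.mem_biUnion.mpr ⟨C, hCI, this⟩)
    · simp only [hPdef, rwStep, if_neg hadj]
  have hdisjBA : ∀ b ∈ B, ∀ a ∈ A, P b a = 0 := by
    intro b hb a ha
    rw [hPsym]
    exact hdisjAB a ha b hb
  have hcover' : ∀ w : V, w ∈ B ∨ w ∈ A ∨ w ∈ S := by
    intro w
    rcases hcover w with h | h | h
    · exact Or.inr (Or.inl h)
    · exact Or.inl h
    · exact Or.inr (Or.inr h)
  -- the hitting sum
  set hit : V → ℝ := fun v => ∑ s ∈ Finset.range τ, ∑ u ∈ S, (P ^ (s+1)) v u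
    with hhitdef
  have hhit_nonneg : ∀ v, 0 ≤ hit v := by
    intro v
    apply Finset.sum_nonneg
    intro s _
    exact Finset.sum_nonneg fun u _ => pow_entry_nonneg P hP0 _ _ _
  have hhit_tot : ∑ v, hit v = (τ : ℝ) * S.card := by
    simp only [hhitdef]
    rw [Finset.sum_comm]
    have : ∀ s ∈ Finset.range τ, ∑ v, ∑ u ∈ S, (P ^ (s+1)) v u = (S.card : ℝ) := by
      intro s _
      rw [show (∑ v, ∑ u ∈ S, (P ^ (s+1)) v u) = ∑ u ∈ S, ∑ v, (P ^ (s+1)) v u from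
        Finset.sum_comm]
      rw [Finset.sum_congr rfl (fun u _ => hPcol (s+1) u)]
      simp
    rw [Finset.sum_congr rfl this]
    simp [mul_comm]
  set G : Finset V := Finset.univ.filter (fun v => 1/4 ≤ hit v) with hG
  have hGcard : (G.card : ℝ) ≤ 4 * τ * S.card := by
    have h1 : (G.card : ℝ) * (1/4) ≤ ∑ v ∈ G, hit v := by
      have := Finset.card_nsmul_le_sum G hit (1/4)
        (fun v hv => (Finset.mem_filter.mp hv).2)
      simpa [nsmul_eq_mul] using this
    have h2 : ∑ v ∈ G, hit v ≤ ∑ v, hit v :=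
      Finset.sum_le_sum_of_subset_of_nonneg (Finset.subset_univ G)
        (fun v _ _ => hhit_nonneg v)
    rw [hhit_tot] at h2
    linarith
  -- find a good mixing vertex
  set M : Finset V := Finset.univ.filter
    (fun v : V => tvDist (rwDist Γ v τ) (unif V) < δ) with hM
  have hvex : ∃ v, v ∈ M ∧ v ∉ G ∧ v ∉ S := by
    have h1 : (M.card : ℝ) ≤ ((M \ (G ∪ S)).card : ℝ) + ((G ∪ S).card : ℝ) := by
      exact_mod_cast Finset.card_le_card_sdiff_add_card
    have h2 : ((G ∪ S).card : ℝ) ≤ (G.card : ℝ) + S.card := by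
      exact_mod_cast Finset.card_union_le G S
    have hτS : (0:ℝ) ≤ (τ:ℝ) * S.card := mul_nonneg (Nat.cast_nonneg _) (Nat.cast_nonneg _)
    have h3 : (S.card : ℝ) ≤ (τ:ℝ) * S.card := by
      have := mul_le_mul_of_nonneg_right hτ1 hSnonneg
      linarith
    have hεn : (0:ℝ) < ε * n := mul_pos hε hnpos
    have hτS' : (τ:ℝ) * S.card * 48 < ε * n := by linarith [hScard]
    have hMc : ε * n ≤ (M.card : ℝ) := hmix
    have h4 : (0:ℝ) < ((M \ (G ∪ S)).card : ℝ) := by linarith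
    have h5 : 0 < (M \ (G ∪ S)).card := by exact_mod_cast h4
    obtain ⟨v, hv⟩ := Finset.card_pos.mp h5
    rw [Finset.mem_sdiff, Finset.mem_union] at hv
    push_neg at hv
    exact ⟨v, hv.1, hv.2.1, hv.2.2⟩
  obtain ⟨v, hvM, hvG, hvS⟩ := hvex
  have hv_hit : hit v < 1/4 := by
    by_contra h
    push_neg at h
    exact hvG (Finset.mem_filter.mpr ⟨Finset.mem_univ v, h⟩)
  have hv_mix : tvDist (rwDist Γ v τ) (unif V) < δ := by
    rw [hM] at hvM
    exact (Finset.mem_filter.mp hvM).2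
  -- the generic contradiction
  have key : ∀ X Y : Finset V, (∀ w : V, w ∈ X ∨ w ∈ Y ∨ w ∈ S) →
      (∀ a ∈ X, ∀ b ∈ Y, P a b = 0) → v ∉ Y →
      ((n:ℝ)/3 - S.card ≤ Y.card) → False := by
    intro X Y hcov hadj hvY hYlow
    have hesc := escape_lemma P hP0 hProw X Y S hcov hadj τ v
    rw [if_neg hvY, add_zero] at hesc
    have hsplit : (∑ s ∈ Finset.range (τ + 1), ∑ u ∈ S, (P ^ s) v u)
        = hit v + ∑ u ∈ S, (P ^ 0) v u :=
      Finset.sum_range_succ' (fun s => ∑ u ∈ S, (P ^ s) v u) τ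
    have hzero : (∑ u ∈ S, (P ^ 0) v u) = 0 := by
      simp only [pow_zero, Matrix.one_apply]
      rw [Finset.sum_ite_eq]
      simp [hvS]
    rw [hsplit, hzero, add_zero] at hesc
    -- lower bound from mixing
    have hlow : (Y.card : ℝ) / n - 2 * δ ≤ ∑ u ∈ Y, (P ^ τ) v u := by
      have e1 : ∀ u, |(P ^ τ) v u - unif V u|
          = |rwDist Γ v τ u - unif V u| := fun u => rfl
      have habs : ∑ u, |(P ^ τ) v u - unif V u| < 2 * δ := by
        have : ∑ u, |rwDist Γ v τ u - unif V u| < 2 * δ := by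
          have := hv_mix
          rw [tvDist] at this
          linarith
        simpa [e1] using this
      have h6 : ∑ u ∈ Y, |(P ^ τ) v u - unif V u| < 2 * δ := by
        have := Finset.sum_le_sum_of_subset_of_nonneg (Finset.subset_univ Y)
          (fun u _ _ => abs_nonneg ((P ^ τ) v u - unif V u))
        linarith
      have h7 : ∀ u ∈ Y, unif V u - |(P ^ τ) v u - unif V u| ≤ (P ^ τ) v u := by
        intro u _
        have := neg_abs_le ((P ^ τ) v u - unif V u)
        linarith
      have h8 : ∑ u ∈ Y, (unif V u - |(P ^ τ) v u - unif V u|) ≤ ∑ u ∈ Y, (P ^ τ) v u :=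
        Finset.sum_le_sum h7
      rw [Finset.sum_sub_distrib] at h8
      have h9 : ∑ u ∈ Y, unif V u = (Y.card : ℝ) / n := by
        simp only [unif]
        rw [Finset.sum_const, nsmul_eq_mul, ← hn]
        ring
      rw [h9] at h8
      linarith
    have hYn : 39/120 < (Y.card : ℝ) / n := by
      rw [lt_div_iff₀ hnpos]
      linarith [hYlow, hS120]
    linarith
  rcases hcover v with hvA | hvB | hvS'
  · have hvnB : v ∉ B := by
      simp only [hB, Finset.mem_sdiff]
      rintro ⟨-, h2⟩
      exact h2 hvA
    exact key A B hcover hdisjAB hvnB hBlow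
  · have hvnA : v ∉ A := by
      rw [hB, Finset.mem_sdiff] at hvB
      exact hvB.2
    exact key B A hcover' hdisjBA hvnA hAlow
  · exact hvS hvS'
end
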